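/- Suppose Assumption 1 holds with parameters m, r, n1, n2 (with r < m), and let G be the Gram matrix of the data with zeroed diagonal. Let the i-th column of D be an inlier and the (n1+j)-th column be an outlier. If (n1/r)·(1 − 2r²/m) > n2/m + 1/r, then E‖g_i‖₂² > 2·E‖g_{n1+j}‖₂². -/

import Mathlib

noncomputable section

/-- A measurable-space structure on matrices (as functions of two indices). -/
instance matrixMeasurableSpace {l n α : Type*} [MeasurableSpace α] :
    MeasurableSpace (Matrix l n α) :=
  inferInstanceAs (MeasurableSpace (l → n → α))

/-- `μ` is the uniform distribution on the unit sphere `S^{N-1}` of `ℝ^N`: the unique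
probability measure supported on the unit sphere which is invariant under every
orthogonal transformation. -/
def IsUniformOnSphere {N : ℕ} (μ : MeasureTheory.Measure (Fin N → ℝ)) : Prop :=
  MeasureTheory.IsProbabilityMeasure μ ∧ (∀ᵐ x ∂μ, ∑ i, x i ^ 2 = 1) ∧
    ∀ Q : Matrix (Fin N) (Fin N) ℝ, Q.transpose * Q = 1 → μ.map Q.mulVec = μ

/-- `ν` is the Haar (uniform) distribution on the orthogonal group `O(m)`: the unique
probability measure supported on orthogonal matrices which is invariant under left
multiplication by any orthogonal matrix. -/
def IsHaarOrthogonal {m : ℕ} (ν : MeasureTheory.Measure (Matrix (Fin m) (Fin m) ℝ)) : Prop :=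
  MeasureTheory.IsProbabilityMeasure ν ∧ (∀ᵐ Q ∂ν, Q.transpose * Q = 1) ∧
    ∀ R : Matrix (Fin m) (Fin m) ℝ, R.transpose * R = 1 → ν.map (fun Q => R * Q) = ν

/-- Zero-padding embedding of `ℝ^r` into `ℝ^m`, whose image is the fixed
`r`-dimensional coordinate subspace of `ℝ^m`. -/
def pad (r m : ℕ) (x : Fin r → ℝ) : Fin m → ℝ :=
  fun j => if h : (j : ℕ) < r then x ⟨j, h⟩ else 0

/-- Index type for the independent random sources in Assumption 1. -/
def A1Idx (n1 n2 : ℕ) : Type := Option (Fin n1 ⊕ Fin n2)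

/-- Codomains of the independent random sources in Assumption 1. -/
def A1cod (m r n1 n2 : ℕ) : A1Idx n1 n2 → Type
  | none => Matrix (Fin m) (Fin m) ℝ
  | some (Sum.inl _) => Fin r → ℝ
  | some (Sum.inr _) => Fin m → ℝ

instance A1codMeas (m r n1 n2 : ℕ) (k : A1Idx n1 n2) : MeasurableSpace (A1cod m r n1 n2 k) :=
  match k with
  | none => inferInstanceAs (MeasurableSpace (Matrix (Fin m) (Fin m) ℝ))
  | some (Sum.inl _) => inferInstanceAs (MeasurableSpace (Fin r → ℝ))
  | some (Sum.inr _) => inferInstanceAs (MeasurableSpace (Fin m → ℝ))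

/-- **Assumption 1** of the paper. The random `r`-dimensional subspace `U` of `ℝ^m` is the
image of the fixed coordinate `r`-subspace under a Haar-random orthogonal matrix `O`.
The `n1` inliers (columns of `A`) are `aᵢ = O ⬝ pad yᵢ` with the `yᵢ` i.i.d. uniform on the
unit sphere of `ℝ^r` (hence each `aᵢ` is uniform on `S^{m-1} ∩ U`); the `n2` outliers
(columns of `B`) are i.i.d. uniform on `S^{m-1}`; and `O`, the `yᵢ`'s and the `bⱼ`'s
are jointly independent. The data matrix is `D = [A B]`. -/
structure Assumption1 (m r n1 n2 : ℕ) where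
  Ω : Type
  [mΩ : MeasurableSpace Ω]
  P : MeasureTheory.Measure Ω
  prob : MeasureTheory.IsProbabilityMeasure P
  O : Ω → Matrix (Fin m) (Fin m) ℝ
  y : Fin n1 → Ω → Fin r → ℝ
  b : Fin n2 → Ω → Fin m → ℝ
  measO : Measurable O
  measy : ∀ i, Measurable (y i)
  measb : ∀ j, Measurable (b j)
  lawO : IsHaarOrthogonal (P.map O)
  lawy : ∀ i, IsUniformOnSphere (P.map (y i))
  lawb : ∀ j, IsUniformOnSphere (P.map (b j))
  indep : ProbabilityTheory.iIndepFun (m := A1codMeas m r n1 n2)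
    (fun k => match k with
      | none => O
      | some (Sum.inl i) => y i
      | some (Sum.inr j) => b j) P

variable {m r n1 n2 : ℕ}

/-- The `i`-th inlier `aᵢ`: a uniformly random unit vector of the random subspace `U`. -/
def Assumption1.inlier (M : Assumption1 m r n1 n2) (i : Fin n1) (ω : M.Ω) : Fin m → ℝ :=
  (M.O ω).mulVec (pad r m (M.y i ω))

/-- The `k`-th column of the data matrix `D = [A B]`. -/
def Assumption1.col (M : Assumption1 m r n1 n2) (k : Fin (n1 + n2)) (ω : M.Ω) : Fin m → ℝ :=
  if h : (k : ℕ) < n1 then M.inlier ⟨k, h⟩ ω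
  else M.b ⟨(k : ℕ) - n1, by have := k.isLt; omega⟩ ω

/-- `‖g_k‖₁`: the `ℓ₁`-norm of the `k`-th column of the Gram matrix `G = Dᵀ D`
with zeroed diagonal. -/
def Assumption1.g1 (M : Assumption1 m r n1 n2) (k : Fin (n1 + n2)) (ω : M.Ω) : ℝ :=
  ∑ l, if l = k then 0 else |∑ s, M.col l ω s * M.col k ω s|

/-- `‖g_k‖₂²`: the squared `ℓ₂`-norm of the `k`-th column of the Gram matrix `G = Dᵀ D`
with zeroed diagonal. -/
def Assumption1.g2sq (M : Assumption1 m r n1 n2) (k : Fin (n1 + n2)) (ω : M.Ω) : ℝ :=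
  ∑ l, if l = k then 0 else (∑ s, M.col l ω s * M.col k ω s) ^ 2

/-!
For a uniformly distributed unit vector `y` of `ℝ^N` the second-moment matrix `E[y yᵀ]` is `I / N`:
permutations of the coordinates equalise its diagonal, whose trace is `E‖y‖² = 1`, and the
reflection in one coordinate kills the off-diagonal entries. Hence `E[(x ⬝ y)²] = 1 / N` for every
unit vector `x` independent of `y`. The rotation `O` preserves inner products, so two distinct
inliers contribute `1 / r` while every pair involving an outlier contributes `1 / m`. This gives
`E‖g_i‖² = (n1 - 1)/r + n2/m` and `E‖g_{n1+j}‖² = (n1 + n2 - 1)/m`, and the hypothesis, multiplied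
by `r m` and combined with `r ≤ r²`, gives the inequality.
-/

open MeasureTheory ProbabilityTheory Finset Matrix

section SphereMoments

variable {N : ℕ}

lemma abs_apply_le_one_of_sum_sq_eq_one {x : Fin N → ℝ} (hx : ∑ i, x i ^ 2 = 1) (u : Fin N) :
    |x u| ≤ 1 := by
  rw [← sq_le_one_iff_abs_le_one, ← hx]
  exact single_le_sum (fun i _ => sq_nonneg (x i)) (mem_univ u)

variable {Ω : Type*} [MeasurableSpace Ω] {P : Measure Ω}

lemma IsUniformOnSphere.ae_sum_sq_eq_one {Z : Ω → Fin N → ℝ} (hZ : Measurable Z)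
    (h : IsUniformOnSphere (P.map Z)) : ∀ᵐ ω ∂P, ∑ i, Z ω i ^ 2 = 1 :=
  ae_of_ae_map hZ.aemeasurable h.2.1

variable [IsProbabilityMeasure P]

lemma integrable_apply_mul_apply_of_ae_sum_sq_eq_one {Z : Ω → Fin N → ℝ} (hZ : Measurable Z)
    (hZ1 : ∀ᵐ ω ∂P, ∑ i, Z ω i ^ 2 = 1) (u v : Fin N) :
    Integrable (fun ω => Z ω u * Z ω v) P := by
  refine .of_bound (((measurable_pi_apply u).comp hZ).mul
    ((measurable_pi_apply v).comp hZ)).aestronglyMeasurable 1 ?_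
  filter_upwards [hZ1] with ω hω
  rw [Real.norm_eq_abs, abs_mul]
  exact mul_le_one₀ (abs_apply_le_one_of_sum_sq_eq_one hω u) (abs_nonneg _)
    (abs_apply_le_one_of_sum_sq_eq_one hω v)

lemma integrable_dotProduct_sq_of_ae_sum_sq_eq_one {X Y : Ω → Fin N → ℝ} (hX : Measurable X)
    (hY : Measurable Y) (hX1 : ∀ᵐ ω ∂P, ∑ i, X ω i ^ 2 = 1) (hY1 : ∀ᵐ ω ∂P, ∑ i, Y ω i ^ 2 = 1) :
    Integrable (fun ω => (X ω ⬝ᵥ Y ω) ^ 2) P := by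
  have hmeas : Measurable fun ω => (X ω ⬝ᵥ Y ω) ^ 2 := by
    simp only [dotProduct]
    exact (Finset.measurable_sum _ fun s _ =>
      ((measurable_pi_apply s).comp hX).mul ((measurable_pi_apply s).comp hY)).pow_const 2
  refine .of_bound hmeas.aestronglyMeasurable 1 ?_
  filter_upwards [hX1, hY1] with ω hXω hYω
  rw [Real.norm_eq_abs, abs_of_nonneg (sq_nonneg _)]
  calc (X ω ⬝ᵥ Y ω) ^ 2 ≤ (∑ i, X ω i ^ 2) * ∑ i, Y ω i ^ 2 := sum_mul_sq_le_sq_mul_sq _ _ _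
    _ = 1 := by rw [hXω, hYω, one_mul]

lemma sum_integral_apply_mul_self_of_ae_sum_sq_eq_one {Z : Ω → Fin N → ℝ} (hZ : Measurable Z)
    (hZ1 : ∀ᵐ ω ∂P, ∑ i, Z ω i ^ 2 = 1) :
    ∑ i, ∫ ω, Z ω i * Z ω i ∂P = 1 := by
  rw [← integral_finsetSum _ fun i _ => integrable_apply_mul_apply_of_ae_sum_sq_eq_one hZ hZ1 i i,
    integral_congr_ae (hZ1.mono fun ω hω => by simpa only [sq] using hω)]
  simp

lemma measurable_mulVec_of_measurable {α : Type*} [MeasurableSpace α]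
    {Q : α → Matrix (Fin N) (Fin N) ℝ} {v : α → Fin N → ℝ} (hQ : Measurable Q)
    (hv : Measurable v) : Measurable fun a => Q a *ᵥ v a := by
  refine measurable_pi_lambda _ fun i => ?_
  simp only [mulVec, dotProduct]
  exact Finset.measurable_sum _ fun j _ =>
    ((measurable_pi_apply j).comp ((measurable_pi_apply i).comp hQ)).mul
      ((measurable_pi_apply j).comp hv)

lemma IsUniformOnSphere.integral_comp_mulVec {μ : Measure (Fin N → ℝ)} (hμ : IsUniformOnSphere μ)
    {Q : Matrix (Fin N) (Fin N) ℝ} (hQ : Qᵀ * Q = 1) {f : (Fin N → ℝ) → ℝ} (hf : Measurable f) :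
    ∫ x, f (Q *ᵥ x) ∂μ = ∫ x, f x ∂μ := by
  conv_rhs => rw [← hμ.2.2 Q hQ]
  exact (integral_map (measurable_mulVec_of_measurable measurable_const measurable_id).aemeasurable
    hf.aestronglyMeasurable).symm

lemma transpose_permMatrix_mul_self (σ : Equiv.Perm (Fin N)) :
    (σ.permMatrix ℝ)ᵀ * σ.permMatrix ℝ = 1 := by
  rw [transpose_permMatrix, ← permMatrix_mul, mul_inv_cancel, permMatrix_one]

lemma transpose_diagonal_sign_mul_self (s : Fin N) :
    (diagonal fun j => if j = s then (-1 : ℝ) else 1)ᵀ *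
      diagonal (fun j => if j = s then (-1 : ℝ) else 1) = 1 := by
  rw [diagonal_transpose, diagonal_mul_diagonal, ← diagonal_one]
  congr 1
  ext j
  split_ifs <;> norm_num

theorem IsUniformOnSphere.integral_apply_mul_apply {μ : Measure (Fin N → ℝ)}
    (hμ : IsUniformOnSphere μ) (s t : Fin N) :
    ∫ x, x s * x t ∂μ = if s = t then 1 / (N : ℝ) else 0 := by
  have : IsProbabilityMeasure μ := hμ.1
  have hmeas (u v : Fin N) : Measurable fun x : Fin N → ℝ => x u * x v :=
    (measurable_pi_apply u).mul (measurable_pi_apply v)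
  split_ifs with hst
  · subst hst
    have hdiag (u : Fin N) : ∫ x, x u * x u ∂μ = ∫ x, x s * x s ∂μ := by
      rw [← hμ.integral_comp_mulVec (transpose_permMatrix_mul_self (Equiv.swap u s)) (hmeas u u)]
      simp [permMatrix_mulVec]
    have hsum := sum_integral_apply_mul_self_of_ae_sum_sq_eq_one (P := μ) measurable_id hμ.2.1
    simp only [id, hdiag, sum_const, card_univ, Fintype.card_fin, nsmul_eq_mul] at hsum
    have hN : (N : ℝ) ≠ 0 := by exact_mod_cast (Fin.pos s).ne'
    rw [eq_div_iff hN, mul_comm]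
    exact hsum
  · have hrefl := hμ.integral_comp_mulVec (transpose_diagonal_sign_mul_self s) (hmeas s t)
    simp only [mulVec_diagonal, if_neg (Ne.symm hst), ↓reduceIte, one_mul, neg_mul,
      integral_neg] at hrefl
    linarith

theorem integral_dotProduct_sq_of_indepFun {X Y : Ω → Fin N → ℝ} (hX : Measurable X)
    (hY : Measurable Y) (hXY : IndepFun X Y P) (hX1 : ∀ᵐ ω ∂P, ∑ i, X ω i ^ 2 = 1)
    (hYlaw : IsUniformOnSphere (P.map Y)) :
    ∫ ω, (X ω ⬝ᵥ Y ω) ^ 2 ∂P = 1 / N := by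
  have hY1 := hYlaw.ae_sum_sq_eq_one hY
  have hmeas (u v : Fin N) : Measurable fun x : Fin N → ℝ => x u * x v :=
    (measurable_pi_apply u).mul (measurable_pi_apply v)
  have hindep (s t : Fin N) :
      IndepFun (fun ω => X ω s * X ω t) (fun ω => Y ω s * Y ω t) P :=
    hXY.comp (hmeas s t) (hmeas s t)
  have hint (s t : Fin N) : Integrable (fun ω => X ω s * X ω t * (Y ω s * Y ω t)) P :=
    (hindep s t).integrable_mul (integrable_apply_mul_apply_of_ae_sum_sq_eq_one hX hX1 s t)
      (integrable_apply_mul_apply_of_ae_sum_sq_eq_one hY hY1 s t)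
  have hterm (s t : Fin N) : ∫ ω, X ω s * X ω t * (Y ω s * Y ω t) ∂P
      = (∫ ω, X ω s * X ω t ∂P) * if s = t then 1 / (N : ℝ) else 0 := by
    rw [(hindep s t).integral_fun_mul_eq_mul_integral ((hmeas s t).comp hX).aestronglyMeasurable
      ((hmeas s t).comp hY).aestronglyMeasurable, ← hYlaw.integral_apply_mul_apply,
      integral_map hY.aemeasurable (hmeas s t).aestronglyMeasurable]
  calc ∫ ω, (X ω ⬝ᵥ Y ω) ^ 2 ∂P
      = ∫ ω, ∑ s, ∑ t, X ω s * X ω t * (Y ω s * Y ω t) ∂P := by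
        congr 1 with ω
        rw [sq, dotProduct, sum_mul_sum]
        exact sum_congr rfl fun s _ => sum_congr rfl fun t _ => by ring
    _ = ∑ s, ∑ t, (∫ ω, X ω s * X ω t ∂P) * if s = t then 1 / (N : ℝ) else 0 := by
        rw [integral_finsetSum _ fun s _ => integrable_finsetSum _ fun t _ => hint s t]
        refine sum_congr rfl fun s _ => ?_
        rw [integral_finsetSum _ fun t _ => hint s t]
        exact sum_congr rfl fun t _ => hterm s t
    _ = (∑ s, ∫ ω, X ω s * X ω s ∂P) * (1 / N) := by
        simp only [mul_ite, mul_zero, sum_ite_eq, mem_univ, if_true, sum_mul]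
    _ = 1 / N := by rw [sum_integral_apply_mul_self_of_ae_sum_sq_eq_one hX hX1, one_mul]

end SphereMoments

lemma measurable_pad : Measurable (pad r m) := by
  refine measurable_pi_lambda _ fun j => ?_
  unfold pad
  split
  · exact measurable_pi_apply _
  · exact measurable_const

lemma pad_dotProduct_pad (hrm : r ≤ m) (x z : Fin r → ℝ) : pad r m x ⬝ᵥ pad r m z = x ⬝ᵥ z := by
  obtain ⟨k, rfl⟩ := Nat.exists_eq_add_of_le hrm
  simp [dotProduct, Fin.sum_univ_add, pad]

lemma mulVec_dotProduct_mulVec_of_transpose_mul_self {Q : Matrix (Fin m) (Fin m) ℝ}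
    (hQ : Qᵀ * Q = 1) (u v : Fin m → ℝ) : Q *ᵥ u ⬝ᵥ Q *ᵥ v = u ⬝ᵥ v := by
  rw [dotProduct_mulVec, ← vecMul_transpose, vecMul_vecMul, hQ, vecMul_one]

namespace Assumption1

variable (M : Assumption1 m r n1 n2)

attribute [instance] Assumption1.mΩ

instance : IsProbabilityMeasure M.P := M.prob

lemma measurable_source (k : A1Idx n1 n2) :
    Measurable ((fun k => match k with
      | none => M.O
      | some (Sum.inl i) => M.y i
      | some (Sum.inr j) => M.b j : (k : A1Idx n1 n2) → M.Ω → A1cod m r n1 n2 k) k) := by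
  rcases k with _ | i | j
  · exact M.measO
  · exact M.measy i
  · exact M.measb j

lemma measurable_inlier (i : Fin n1) : Measurable (M.inlier i) :=
  measurable_mulVec_of_measurable M.measO (measurable_pad.comp (M.measy i))

lemma indepFun_y {i i' : Fin n1} (h : i ≠ i') : IndepFun (M.y i) (M.y i') M.P :=
  M.indep.indepFun (i := some (.inl i)) (j := some (.inl i'))
    fun hk => h (Sum.inl.inj (Option.some.inj hk))

lemma indepFun_b {j j' : Fin n2} (h : j ≠ j') : IndepFun (M.b j) (M.b j') M.P :=
  M.indep.indepFun (i := some (.inr j)) (j := some (.inr j'))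
    fun hk => h (Sum.inr.inj (Option.some.inj hk))

lemma indepFun_inlier_b (i : Fin n1) (j : Fin n2) : IndepFun (M.inlier i) (M.b j) M.P := by
  have hOy_b := M.indep.indepFun_prodMk M.measurable_source none (some (.inl i)) (some (.inr j))
    (fun hk => by cases hk) (fun hk => by cases hk)
  have hφ : Measurable fun p : Matrix (Fin m) (Fin m) ℝ × (Fin r → ℝ) => p.1 *ᵥ pad r m p.2 :=
    measurable_mulVec_of_measurable measurable_fst (measurable_pad.comp measurable_snd)
  exact hOy_b.comp hφ measurable_id

lemma ae_inlier_dotProduct_inlier (hrm : r ≤ m) (i i' : Fin n1) :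
    ∀ᵐ ω ∂M.P, M.inlier i ω ⬝ᵥ M.inlier i' ω = M.y i ω ⬝ᵥ M.y i' ω := by
  filter_upwards [ae_of_ae_map M.measO.aemeasurable M.lawO.2.1] with ω hO
  rw [inlier, inlier, mulVec_dotProduct_mulVec_of_transpose_mul_self hO, pad_dotProduct_pad hrm]

lemma ae_sum_sq_inlier (hrm : r ≤ m) (i : Fin n1) : ∀ᵐ ω ∂M.P, ∑ s, M.inlier i ω s ^ 2 = 1 := by
  filter_upwards [M.ae_inlier_dotProduct_inlier hrm i i,
    (M.lawy i).ae_sum_sq_eq_one (M.measy i)] with ω hdot hy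
  simp only [sq] at hy ⊢
  exact hdot.trans hy

lemma integral_inlier_dotProduct_inlier_sq (hrm : r ≤ m) {i i' : Fin n1} (h : i ≠ i') :
    ∫ ω, (M.inlier i ω ⬝ᵥ M.inlier i' ω) ^ 2 ∂M.P = 1 / r := by
  rw [integral_congr_ae ((M.ae_inlier_dotProduct_inlier hrm i i').mono fun ω hω => by rw [hω])]
  exact integral_dotProduct_sq_of_indepFun (M.measy i) (M.measy i') (M.indepFun_y h)
    ((M.lawy i).ae_sum_sq_eq_one (M.measy i)) (M.lawy i')

lemma integral_inlier_dotProduct_b_sq (hrm : r ≤ m) (i : Fin n1) (j : Fin n2) :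
    ∫ ω, (M.inlier i ω ⬝ᵥ M.b j ω) ^ 2 ∂M.P = 1 / m :=
  integral_dotProduct_sq_of_indepFun (M.measurable_inlier i) (M.measb j) (M.indepFun_inlier_b i j)
    (M.ae_sum_sq_inlier hrm i) (M.lawb j)

lemma integral_b_dotProduct_b_sq {j j' : Fin n2} (h : j ≠ j') :
    ∫ ω, (M.b j ω ⬝ᵥ M.b j' ω) ^ 2 ∂M.P = 1 / m :=
  integral_dotProduct_sq_of_indepFun (M.measb j) (M.measb j') (M.indepFun_b h)
    ((M.lawb j).ae_sum_sq_eq_one (M.measb j)) (M.lawb j')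

lemma col_castAdd (i : Fin n1) : M.col (Fin.castAdd n2 i) = M.inlier i := by
  funext ω
  simp [col]

lemma col_natAdd (j : Fin n2) : M.col (Fin.natAdd n1 j) = M.b j := by
  funext ω
  rw [col, dif_neg (by simp)]
  simp

lemma g2sq_eq (k : Fin (n1 + n2)) (ω : M.Ω) :
    M.g2sq k ω = ∑ l, if l = k then 0 else (M.col l ω ⬝ᵥ M.col k ω) ^ 2 :=
  rfl

lemma g2sq_castAdd (i : Fin n1) (ω : M.Ω) :
    M.g2sq (Fin.castAdd n2 i) ω = ∑ i' ∈ univ.erase i, (M.inlier i' ω ⬝ᵥ M.inlier i ω) ^ 2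
      + ∑ j, (M.inlier i ω ⬝ᵥ M.b j ω) ^ 2 := by
  have hne (j : Fin n2) : Fin.natAdd n1 j ≠ Fin.castAdd n2 i := by
    simp only [ne_eq, Fin.ext_iff, Fin.val_natAdd, Fin.val_castAdd]
    omega
  rw [g2sq_eq, Fin.sum_univ_add]
  simp only [col_castAdd, col_natAdd, Fin.castAdd_inj, hne, if_false, dotProduct_comm (M.b _ ω),
    sum_ite, sum_const_zero, zero_add, filter_ne']

lemma g2sq_natAdd (j : Fin n2) (ω : M.Ω) :
    M.g2sq (Fin.natAdd n1 j) ω = ∑ i, (M.inlier i ω ⬝ᵥ M.b j ω) ^ 2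
      + ∑ j' ∈ univ.erase j, (M.b j' ω ⬝ᵥ M.b j ω) ^ 2 := by
  have hne (i : Fin n1) : Fin.castAdd n2 i ≠ Fin.natAdd n1 j := by
    simp only [ne_eq, Fin.ext_iff, Fin.val_natAdd, Fin.val_castAdd]
    omega
  rw [g2sq_eq, Fin.sum_univ_add]
  simp only [col_castAdd, col_natAdd, Fin.natAdd_inj, hne, if_false, sum_ite, sum_const_zero,
    zero_add, filter_ne']

lemma integral_g2sq_castAdd (hrm : r ≤ m) (i : Fin n1) :
    ∫ ω, M.g2sq (Fin.castAdd n2 i) ω ∂M.P = ((n1 : ℝ) - 1) / r + n2 / m := by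
  have hint_in (i' : Fin n1) : Integrable (fun ω => (M.inlier i' ω ⬝ᵥ M.inlier i ω) ^ 2) M.P :=
    integrable_dotProduct_sq_of_ae_sum_sq_eq_one (M.measurable_inlier i') (M.measurable_inlier i)
      (M.ae_sum_sq_inlier hrm i') (M.ae_sum_sq_inlier hrm i)
  have hint_out (j : Fin n2) : Integrable (fun ω => (M.inlier i ω ⬝ᵥ M.b j ω) ^ 2) M.P :=
    integrable_dotProduct_sq_of_ae_sum_sq_eq_one (M.measurable_inlier i) (M.measb j)
      (M.ae_sum_sq_inlier hrm i) ((M.lawb j).ae_sum_sq_eq_one (M.measb j))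
  simp_rw [g2sq_castAdd]
  rw [integral_add (integrable_finsetSum _ fun i' _ => hint_in i')
      (integrable_finsetSum _ fun j _ => hint_out j),
    integral_finsetSum _ fun i' _ => hint_in i', integral_finsetSum _ fun j _ => hint_out j,
    sum_congr rfl fun i' hi' => M.integral_inlier_dotProduct_inlier_sq hrm (ne_of_mem_erase hi'),
    sum_congr rfl fun j _ => M.integral_inlier_dotProduct_b_sq hrm i j]
  rw [sum_const, sum_const, card_erase_of_mem (mem_univ i), card_univ, card_univ,
    Fintype.card_fin, Fintype.card_fin, nsmul_eq_mul, nsmul_eq_mul, Nat.cast_pred i.pos]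
  ring

lemma integral_g2sq_natAdd (hrm : r ≤ m) (j : Fin n2) :
    ∫ ω, M.g2sq (Fin.natAdd n1 j) ω ∂M.P = ((n1 : ℝ) + n2 - 1) / m := by
  have hint_in (i : Fin n1) : Integrable (fun ω => (M.inlier i ω ⬝ᵥ M.b j ω) ^ 2) M.P :=
    integrable_dotProduct_sq_of_ae_sum_sq_eq_one (M.measurable_inlier i) (M.measb j)
      (M.ae_sum_sq_inlier hrm i) ((M.lawb j).ae_sum_sq_eq_one (M.measb j))
  have hint_out (j' : Fin n2) : Integrable (fun ω => (M.b j' ω ⬝ᵥ M.b j ω) ^ 2) M.P :=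
    integrable_dotProduct_sq_of_ae_sum_sq_eq_one (M.measb j') (M.measb j)
      ((M.lawb j').ae_sum_sq_eq_one (M.measb j')) ((M.lawb j).ae_sum_sq_eq_one (M.measb j))
  simp_rw [g2sq_natAdd]
  rw [integral_add (integrable_finsetSum _ fun i _ => hint_in i)
      (integrable_finsetSum _ fun j' _ => hint_out j'),
    integral_finsetSum _ fun i _ => hint_in i, integral_finsetSum _ fun j' _ => hint_out j',
    sum_congr rfl fun i _ => M.integral_inlier_dotProduct_b_sq hrm i j,
    sum_congr rfl fun j' hj' => M.integral_b_dotProduct_b_sq (ne_of_mem_erase hj')]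
  rw [sum_const, sum_const, card_univ, card_erase_of_mem (mem_univ j), card_univ,
    Fintype.card_fin, Fintype.card_fin, nsmul_eq_mul, nsmul_eq_mul, Nat.cast_pred j.pos]
  ring

end Assumption1

lemma two_mul_div_lt_of_coherence_condition {m r n1 n2 : ℕ} (hrm : r < m)
    (hcond : (n1 : ℝ) / r * (1 - 2 * r ^ 2 / m) > (n2 : ℝ) / m + 1 / r) :
    2 * (((n1 : ℝ) + n2 - 1) / m) < ((n1 : ℝ) - 1) / r + n2 / m := by
  obtain ⟨hr, hm⟩ : (0 : ℝ) < r ∧ (0 : ℝ) < m := by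
    rcases Nat.eq_zero_or_pos r with rfl | hr
    · simp only [CharP.cast_eq_zero, div_zero, zero_mul] at hcond
      linarith [div_nonneg (Nat.cast_nonneg n2 : (0 : ℝ) ≤ n2) (Nat.cast_nonneg m)]
    · exact ⟨by exact_mod_cast hr, by exact_mod_cast hr.trans hrm⟩
  have hr1 : (1 : ℝ) ≤ r := by exact_mod_cast (Nat.cast_pos.mp hr)
  have hcond' : (n2 : ℝ) * r + m < n1 * (m - 2 * r ^ 2) := by
    have := mul_lt_mul_of_pos_right hcond (mul_pos hr hm)
    field_simp at this
    linarith
  rw [← sub_pos]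
  have hdiff : ((n1 : ℝ) - 1) / r + n2 / m - 2 * ((n1 + n2 - 1) / m)
      = ((n1 - 1) * m + n2 * r - 2 * (n1 + n2 - 1) * r) / (r * m) := by
    field_simp
  rw [hdiff]
  apply div_pos _ (mul_pos hr hm)
  nlinarith [mul_le_mul_of_nonneg_left hr1 (by positivity : (0 : ℝ) ≤ 2 * n1 * r)]

/-- **Lemma 2** (CoP paper): under Assumption 1 with `r < m`, if
`(n1/r)(1 − 2r²/m) > n2/m + 1/r`, then `E‖g_i‖₂² > 2 E‖g_(n1+j)‖₂²`
for any inlier index `i` and outlier index `j`. -/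
theorem coherence_pursuit_lemma2 {m r n1 n2 : ℕ} (hrm : r < m)
    (M : Assumption1 m r n1 n2) (i : Fin n1) (j : Fin n2)
    (hcond : (n1 : ℝ) / r * (1 - 2 * r ^ 2 / m) > (n2 : ℝ) / m + 1 / r) :
    (∫ ω, M.g2sq ⟨i, by have := i.isLt; omega⟩ ω ∂M.P) > 2 * ∫ ω, M.g2sq ⟨n1 + j, by have := j.isLt; omega⟩ ω ∂M.P := by
  change 2 * ∫ ω, M.g2sq (Fin.natAdd n1 j) ω ∂M.P < ∫ ω, M.g2sq (Fin.castAdd n2 i) ω ∂M.P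
  rw [M.integral_g2sq_castAdd hrm.le, M.integral_g2sq_natAdd hrm.le]
  exact two_mul_div_lt_of_coherence_condition hrm hcond
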